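/- For every real π with 0 ≤ π ≤ 1, (1 − π)/(4 − 3.627·π) + h₂( 1/(24 − 21.762·π) ) < 1. -/

import Mathlib

/-- The binary entropy function `h₂(p) = −p·log₂ p − (1−p)·log₂(1−p)`
(with the conventions `h₂ 0 = h₂ 1 = 0`, automatic since `Real.logb 2 0 = 0`). -/
noncomputable def h2 (p : ℝ) : ℝ := -p * Real.logb 2 p - (1 - p) * Real.logb 2 (1 - p)

/-!
With `p = 1/2 - v`, the power series of `log (1 + x) - log (1 - x)` gives
`log 2 - H(1/2 - v) ≥ 2 v² + 4 v⁴ / 3` for the binary entropy `H` in nats (both sides vanish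
at `v = 0`, and the `v`-derivatives compare termwise). For `p = 1/(24 - 21.762 π)` the claim
then reduces to a polynomial inequality in `π` of degree five, which is tight to within about
`10⁻⁴` near `π ≈ 0.9864`, so `log 2` has to be bounded to about seven digits.
-/

section

open Real

theorem h2_eq_binEntropy_div_log_two (p : ℝ) : h2 p = binEntropy p / log 2 := by
  simp only [h2, binEntropy, logb, log_inv]
  ring

theorem two_mul_add_le_log_one_add_sub_log_one_sub {x : ℝ} (hx₀ : 0 ≤ x) (hx₁ : x < 1) :
    2 * x + 2 * x ^ 3 / 3 ≤ log (1 + x) - log (1 - x) := by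
  have hs := hasSum_log_sub_log_of_abs_lt_one (abs_lt.2 ⟨by linarith, hx₁⟩)
  have := sum_le_hasSum (Finset.range 2) (fun k _ => by positivity) hs
  norm_num [Finset.sum_range_succ] at this
  linarith

theorem hasDerivAt_binEntropy_two_inv_sub {v : ℝ} (hv : |v| < 2⁻¹) :
    HasDerivAt (fun w => binEntropy (2⁻¹ - w))
      (-(log (1 + 2 * v) - log (1 - 2 * v))) v := by
  obtain ⟨hv₀, hv₁⟩ := abs_lt.1 hv
  have h := (hasDerivAt_binEntropy (p := 2⁻¹ - v) (by linarith) (by linarith)).comp v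
    ((hasDerivAt_id v).const_sub 2⁻¹)
  refine h.congr_deriv ?_
  have e₁ : 1 - (2⁻¹ - v) = (1 + 2 * v) / 2 := by ring
  have e₂ : 2⁻¹ - v = (1 - 2 * v) / 2 := by ring
  rw [e₁, e₂, log_div (by linarith) two_ne_zero, log_div (by linarith) two_ne_zero]
  ring

theorem binEntropy_two_inv_sub_le {v : ℝ} (hv₀ : 0 ≤ v) (hv₁ : v ≤ 2⁻¹) :
    binEntropy (2⁻¹ - v) ≤ log 2 - (2 * v ^ 2 + 4 * v ^ 4 / 3) := by
  set g : ℝ → ℝ := fun w => binEntropy (2⁻¹ - w) + (2 * w ^ 2 + 4 * w ^ 4 / 3)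
  have hg' : ∀ w ∈ Set.Ioo (0 : ℝ) 2⁻¹, HasDerivAt g
      (-(log (1 + 2 * w) - log (1 - 2 * w)) + (4 * w + 16 * w ^ 3 / 3)) w := by
    intro w ⟨hw₀, hw₁⟩
    refine (hasDerivAt_binEntropy_two_inv_sub (abs_lt.2 ⟨by linarith, hw₁⟩)).add ?_
    refine (((hasDerivAt_pow 2 w).const_mul 2).add
      (((hasDerivAt_pow 4 w).const_mul 4).div_const 3)).congr_deriv ?_
    norm_num
    ring
  have hg : AntitoneOn g (Set.Icc 0 2⁻¹) := by
    refine antitoneOn_of_deriv_nonpos (convex_Icc 0 2⁻¹) (by fun_prop) ?_ ?_ <;>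
      rw [interior_Icc]
    · exact fun w hw => (hg' w hw).differentiableAt.differentiableWithinAt
    · intro w hw
      have := two_mul_add_le_log_one_add_sub_log_one_sub (x := 2 * w) (by linarith [hw.1])
        (by linarith [hw.2])
      rw [(hg' w hw).deriv]
      linarith
  have := hg ⟨le_rfl, by norm_num⟩ ⟨hv₀, hv₁⟩ hv₀
  simp only [g, sub_zero, binEntropy_two_inv] at this
  linarith

theorem rate_mul_log_two_lt_entropy_gap {x : ℝ} (hx : x ≤ 1) :
    (1 - x) / (4 - 3.627 * x) * log 2 <
      2 * ((22 - 21.762 * x) / (2 * (24 - 21.762 * x))) ^ 2 +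
        4 * ((22 - 21.762 * x) / (2 * (24 - 21.762 * x))) ^ 4 / 3 := by
  have hE : 0 < 4 - 3.627 * x := by linarith
  have hlog : (1 - x) / (4 - 3.627 * x) * log 2 ≤ (1 - x) / (4 - 3.627 * x) * 0.6931471808 :=
    mul_le_mul_of_nonneg_left log_two_lt_d9.le (div_nonneg (by linarith) hE.le)
  refine hlog.trans_lt ?_
  rw [div_pow, div_pow, div_mul_eq_mul_div, div_lt_iff₀ hE]
  field_simp
  rw [lt_div_iff₀ (pow_pos (by linarith) 4)]
  -- the polynomial difference attains its minimum on `[0, 1]` near `x = 0.986439`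
  have c : 0 ≤ (x - 0.986439) ^ 2 := sq_nonneg _
  have ht : 0 ≤ 1 - x := by linarith
  linarith [mul_nonneg c ht, mul_nonneg c (pow_nonneg ht 2), mul_nonneg c (pow_nonneg ht 3),
    pow_nonneg ht 2, pow_nonneg ht 3, pow_nonneg ht 4, pow_nonneg ht 5]

end

/-- For every π ∈ [0,1], (1 − π)/(4 − 3.627·π) + h₂(1/(24 − 21.762·π)) < 1. -/
theorem stmt3 (π : ℝ) (hπ : π ∈ Set.Icc (0:ℝ) 1) :
    (1 - π) / (4 - 3.627 * π) + h2 (1 / (24 - 21.762 * π)) < 1 := by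
  obtain ⟨-, hπ₁⟩ := hπ
  have hgap := rate_mul_log_two_lt_entropy_gap hπ₁
  set v := (22 - 21.762 * π) / (2 * (24 - 21.762 * π))
  have hD : 0 < 24 - 21.762 * π := by linarith
  have hp : 1 / (24 - 21.762 * π) = 2⁻¹ - v := by
    simp only [v]
    field_simp
    ring
  have hv₀ : 0 ≤ v := div_nonneg (by linarith) (by linarith)
  have hv₁ : v ≤ 2⁻¹ := by
    rw [div_le_iff₀ (by linarith)]
    linarith
  have hentropy := binEntropy_two_inv_sub_le hv₀ hv₁
  rw [hp, h2_eq_binEntropy_div_log_two, ← lt_sub_iff_add_lt', div_lt_iff₀ (Real.log_pos one_lt_two)]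
  linarith
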